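/- The function x ↦ arccos(x)/√(1−x) is monotonically decreasing on [0, 1): for 0 ≤ x < y < 1, arccos(y)/√(1−y) ≤ arccos(x)/√(1−x), and the limit as x → 1⁻ of arccos(x)/√(1−x) is √2. -/

import Mathlib

open Real Filter

/-- Key identity: for `θ ∈ [0, π]`, `√(1 - cos θ) = √2 * sin (θ / 2)`. -/
lemma sqrt_one_sub_cos_eq {θ : ℝ} (h0 : 0 ≤ θ) (hπ : θ ≤ π) :
    Real.sqrt (1 - Real.cos θ) = Real.sqrt 2 * Real.sin (θ / 2) := by
  have hs : Real.sin (θ / 2) ^ 2 = 1 / 2 - Real.cos θ / 2 := by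
    have := Real.sin_sq_eq_half_sub (θ / 2)
    rwa [show 2 * (θ / 2) = θ by ring] at this
  have hsnn : 0 ≤ Real.sin (θ / 2) :=
    Real.sin_nonneg_of_nonneg_of_le_pi (by linarith) (by linarith)
  have : 1 - Real.cos θ = 2 * Real.sin (θ / 2) ^ 2 := by rw [hs]; ring
  rw [this, Real.sqrt_mul (by norm_num), Real.sqrt_sq hsnn]

/-- Concavity of `sin`: for `0 < a ≤ b ≤ π`, `a * sin (b/2) ≤ b * sin (a/2)`. -/
lemma mul_sin_half_le {a b : ℝ} (ha : 0 < a) (hab : a ≤ b) (hb : b ≤ π) :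
    a * Real.sin (b / 2) ≤ b * Real.sin (a / 2) := by
  have hb0 : 0 < b := lt_of_lt_of_le ha hab
  have ht0 : 0 < a / b := div_pos ha hb0
  have ht1 : a / b ≤ 1 := (div_le_one hb0).2 hab
  have hmem0 : (0 : ℝ) ∈ Set.Icc (0 : ℝ) π := ⟨le_rfl, Real.pi_pos.le⟩
  have hmemb : b / 2 ∈ Set.Icc (0 : ℝ) π := ⟨by linarith, by linarith⟩
  have hc := strictConcaveOn_sin_Icc.concaveOn.2 hmem0 hmemb
    (show (0:ℝ) ≤ 1 - a / b by linarith) ht0.le (by ring)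
  simp only [Real.sin_zero, smul_eq_mul, mul_zero, zero_add, smul_zero] at hc
  rw [show a / b * (b / 2) = a / 2 by field_simp] at hc
  calc a * Real.sin (b / 2) = b * ((a / b) * Real.sin (b / 2)) := by
        field_simp
    _ ≤ b * Real.sin (a / 2) := by
        apply mul_le_mul_of_nonneg_left hc hb0.le

/-- `sin t / t → 1` as `t → 0` (within punctured neighborhood). -/
lemma tendsto_sin_div_self : Tendsto (fun t : ℝ => Real.sin t / t) (nhdsWithin 0 {0}ᶜ) (nhds 1) := by
  have h := Real.hasDerivAt_sin 0
  rw [hasDerivAt_iff_tendsto_slope] at h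
  have : (slope Real.sin 0) = fun t : ℝ => Real.sin t / t := by
    funext t
    simp [slope_def_field, div_eq_mul_inv]
  rw [this, Real.cos_zero] at h
  exact h

/-- The function `x ↦ arccos x / √(1 - x)` is monotonically decreasing on
`[0, 1)`, and tends to `√2` as `x → 1⁻`. -/
theorem arccos_div_sqrt_one_sub_antitone_and_tendsto :
    (∀ x y : ℝ, 0 ≤ x → x < y → y < 1 →
      Real.arccos y / Real.sqrt (1 - y) ≤ Real.arccos x / Real.sqrt (1 - x)) ∧
    Filter.Tendsto (fun x : ℝ => Real.arccos x / Real.sqrt (1 - x))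
      (nhdsWithin 1 (Set.Iio 1)) (nhds (Real.sqrt 2)) := by
  constructor
  · intro x y hx hxy hy1
    set a := Real.arccos y with ha_def
    set b := Real.arccos x with hb_def
    have hx1 : x < 1 := hxy.trans hy1
    have ha0 : 0 < a := Real.arccos_pos.2 hy1
    have hbπ2 : b ≤ π / 2 := Real.arccos_le_pi_div_two.2 hx
    have hab : a < b := Real.strictAntiOn_arccos
      ⟨by linarith, hx1.le⟩ ⟨by linarith, hy1.le⟩ hxy
    have hcosa : Real.cos a = y := Real.cos_arccos (by linarith) hy1.le
    have hcosb : Real.cos b = x := Real.cos_arccos (by linarith) hx1.le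
    have haπ : a ≤ π := Real.arccos_le_pi y
    have hbπ : b ≤ π := Real.arccos_le_pi x
    rw [← hcosa, ← hcosb, sqrt_one_sub_cos_eq ha0.le haπ,
      sqrt_one_sub_cos_eq (by linarith) hbπ]
    have hsa : 0 < Real.sin (a / 2) :=
      Real.sin_pos_of_pos_of_lt_pi (by linarith) (by linarith [Real.pi_pos])
    have hsb : 0 < Real.sin (b / 2) :=
      Real.sin_pos_of_pos_of_lt_pi (by linarith) (by linarith [Real.pi_pos])
    have h2 : (0 : ℝ) < Real.sqrt 2 := Real.sqrt_pos.2 (by norm_num)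
    rw [div_le_div_iff₀ (by positivity) (by positivity)]
    have key := mul_sin_half_le ha0 hab.le hbπ
    nlinarith [key, h2.le]
  · -- limit part
    have harccos : Tendsto Real.arccos (nhdsWithin 1 (Set.Iio 1))
        (nhdsWithin 0 (Set.Ioi 0)) := by
      rw [tendsto_nhdsWithin_iff]
      constructor
      · have : Tendsto Real.arccos (nhdsWithin 1 (Set.Iio 1)) (nhds (Real.arccos 1)) :=
          (Real.continuous_arccos.continuousAt).continuousWithinAt.tendsto
        rwa [Real.arccos_one] at this
      · filter_upwards [self_mem_nhdsWithin] with x hx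
        exact Real.arccos_pos.2 hx
    have hsin : Tendsto (fun t : ℝ => t / Real.sin t) (nhdsWithin 0 {0}ᶜ) (nhds 1) := by
      have := tendsto_sin_div_self.inv₀ one_ne_zero
      simp only [inv_one] at this
      convert this using 2 with t
      rw [inv_div]
    have hhalf : Tendsto (fun θ : ℝ => θ / 2) (nhdsWithin 0 (Set.Ioi 0))
        (nhdsWithin 0 {0}ᶜ) := by
      rw [tendsto_nhdsWithin_iff]
      constructor
      · have : Tendsto (fun θ : ℝ => θ / 2) (nhds 0) (nhds 0) := by
          simpa using (tendsto_id (x := nhds (0:ℝ))).div_const 2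
        exact this.mono_left nhdsWithin_le_nhds
      · filter_upwards [self_mem_nhdsWithin] with θ hθ
        simp only [Set.mem_compl_iff, Set.mem_singleton_iff]
        have : (0:ℝ) < θ := hθ
        positivity
    -- g θ = θ / √(1 - cos θ) tends to √2 along 𝓝[>] 0
    have hg : Tendsto (fun θ : ℝ => θ / Real.sqrt (1 - Real.cos θ))
        (nhdsWithin 0 (Set.Ioi 0)) (nhds (Real.sqrt 2)) := by
      have hmain : Tendsto (fun θ : ℝ => Real.sqrt 2 * ((θ / 2) / Real.sin (θ / 2)))
          (nhdsWithin 0 (Set.Ioi 0)) (nhds (Real.sqrt 2)) := by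
        have := (hsin.comp hhalf).const_mul (Real.sqrt 2)
        simpa using this
      refine hmain.congr' ?_
      have hmem : ∀ᶠ θ in nhdsWithin (0:ℝ) (Set.Ioi 0), θ ∈ Set.Ioo (0:ℝ) π := by
        filter_upwards [self_mem_nhdsWithin,
          Icc_mem_nhdsGT_of_mem (by constructor <;> [rfl; exact Real.pi_div_two_pos] :
            (0:ℝ) ∈ Set.Ico 0 (π/2))] with θ h1 h2
        exact ⟨h1, lt_of_le_of_lt h2.2 (by linarith [Real.pi_pos])⟩
      filter_upwards [hmem] with θ hθ
      have hsθ : 0 < Real.sin (θ / 2) :=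
        Real.sin_pos_of_pos_of_lt_pi (by linarith [hθ.1]) (by linarith [hθ.2, Real.pi_pos])
      rw [sqrt_one_sub_cos_eq hθ.1.le hθ.2.le]
      have h2 : (0 : ℝ) < Real.sqrt 2 := Real.sqrt_pos.2 (by norm_num)
      have hsq : Real.sqrt 2 * Real.sqrt 2 = 2 := Real.mul_self_sqrt (by norm_num)
      field_simp
      linear_combination θ * hsq
    have hcomp := hg.comp harccos
    refine hcomp.congr' ?_
    filter_upwards [self_mem_nhdsWithin, Ioo_mem_nhdsLT_of_mem
      (by constructor <;> norm_num : (1:ℝ) ∈ Set.Ioc 0 1)] with x hx1 hx0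
    have hcos : Real.cos (Real.arccos x) = x := Real.cos_arccos (by linarith [hx0.1]) hx1.le
    simp only [Function.comp_apply, hcos]
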